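/- arXiv:2502.16712 — 4 statements merged into one kernel-verified Lean document; each statement's English description precedes it below -/
import Mathlib

section
/- Let X and Y be compact Hausdorff spaces and let T : C(X) → C(Y) be a (not necessarily surjective) linear isometry between the Banach spaces of continuous complex-valued functions with the supremum norm. Then there exist a nonempty closed subset Y₀ of Y, a continuous surjection t : Y₀ → X, and a continuous function w : Y₀ → ℂ with |w(y)| = 1 for all y ∈ Y₀, such that (Tf)(y) = w(y)·f(t(y)) for every y ∈ Y₀ and every f ∈ C(X). -/
/-!
Fix `x ∈ X`. The peak functions at `x` (`f x = 1 = ‖f‖`) are closed under midpoints, and since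
`ℂ` is strictly convex, wherever `|T m| = 1` for the midpoint `m` of `f` and `g` we have
`T f = T g` and `|T f| = 1`. The closed sets `{|T f| = 1}` are therefore directed, so by
compactness of `Y` some `y` has `|T 1 y| = 1` and `T f y = T 1 y` for every peak function `f`
at `x`; a bump-function argument upgrades this to `T f y = T 1 y * f x` for all `f`. The pairs
`(x, y)` obtained this way form a compact set that projects injectively to `Y`: its projection
is `Y₀`, the inverse of the projection gives `t`, and `w = T 1`.
-/

open Set Topology

theorem ContinuousMap.exists_norm_apply_eq_norm {α E : Type*} [TopologicalSpace α]
    [CompactSpace α] [Nonempty α] [NormedAddCommGroup E] (f : C(α, E)) :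
    ∃ a, ‖f a‖ = ‖f‖ := by
  obtain ⟨a, -, ha⟩ := isCompact_univ.exists_isMaxOn univ_nonempty
    (continuous_norm.comp f.continuous).continuousOn
  exact ⟨a, le_antisymm (f.norm_coe_le_norm a) (f.norm_le_of_nonempty.2 fun b ↦ ha (mem_univ b))⟩

theorem eq_and_norm_eq_one_of_norm_add_eq_two {E : Type*} [NormedAddCommGroup E]
    [NormedSpace ℝ E] [StrictConvexSpace ℝ E] {a b : E} (ha : ‖a‖ ≤ 1) (hb : ‖b‖ ≤ 1)
    (hab : ‖a + b‖ = 2) : a = b ∧ ‖a‖ = 1 := by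
  have := norm_add_le a b
  have ha₁ : ‖a‖ = 1 := by linarith
  have hb₁ : ‖b‖ = 1 := by linarith
  exact ⟨eq_of_norm_eq_of_norm_add_eq (ha₁.trans hb₁.symm) (by linarith), ha₁⟩

theorem IsCompact.exists_continuous_fst_of_injOn_snd {X Y : Type*} [TopologicalSpace X]
    [TopologicalSpace Y] [T2Space Y] {K : Set (X × Y)} (hK : IsCompact K)
    (hinj : InjOn Prod.snd K) :
    ∃ t : Prod.snd '' K → X, Continuous t ∧ ∀ y, (t y, (y : Y)) ∈ K := by
  have : CompactSpace K := isCompact_iff_compactSpace.1 hK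
  have hemb : IsEmbedding fun p : K ↦ (p : X × Y).2 :=
    ((continuous_snd.comp continuous_subtype_val).isClosedEmbedding
      fun p q h ↦ Subtype.ext (hinj p.2 q.2 h)).isEmbedding
  rw [image_eq_range]
  refine ⟨fun y ↦ (hemb.toHomeomorph.symm y : X × Y).1,
    continuous_fst.comp (continuous_subtype_val.comp hemb.toHomeomorph.symm.continuous),
    fun y ↦ ?_⟩
  rw [← congrArg Subtype.val (hemb.toHomeomorph.apply_symm_apply y)]
  exact (hemb.toHomeomorph.symm y).2

section PeakFunctions

variable {X : Type*} [TopologicalSpace X]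

def peakFunctions (x : X) : Set C(X, ℂ) := {f | f x = 1 ∧ ∀ z, ‖f z‖ ≤ 1}

theorem one_mem_peakFunctions (x : X) : 1 ∈ peakFunctions x := by
  simp [peakFunctions]

theorem norm_eq_one_of_mem_peakFunctions [CompactSpace X] {x : X} {f : C(X, ℂ)}
    (hf : f ∈ peakFunctions x) : ‖f‖ = 1 :=
  le_antisymm ((ContinuousMap.norm_le _ zero_le_one).2 hf.2)
    (by simpa [hf.1] using f.norm_coe_le_norm x)

theorem smul_add_mem_peakFunctions {x : X} {f g : C(X, ℂ)} (hf : f ∈ peakFunctions x)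
    (hg : g ∈ peakFunctions x) : (2⁻¹ : ℂ) • (f + g) ∈ peakFunctions x := by
  refine ⟨by simp [hf.1, hg.1]; norm_num, fun z ↦ ?_⟩
  have := norm_add_le (f z) (g z)
  have := hf.2 z
  have := hg.2 z
  simp only [ContinuousMap.smul_apply, ContinuousMap.add_apply, smul_eq_mul, norm_mul, norm_inv,
    Complex.norm_two]
  linarith

theorem exists_mem_peakFunctions_eqOn_compl_zero [CompletelyRegularSpace X] {x : X} {U : Set X}
    (hU : IsOpen U) (hx : x ∈ U) : ∃ h ∈ peakFunctions x, EqOn h 0 Uᶜ := by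
  obtain ⟨g, hg, hgx, hgU⟩ := CompletelyRegularSpace.completely_regular x Uᶜ hU.isClosed_compl
    (by simpa using hx)
  refine ⟨⟨fun z ↦ ((1 - g z : ℝ) : ℂ), by fun_prop⟩, ⟨by simp [hgx], fun z ↦ ?_⟩, fun z hz ↦ ?_⟩
  · simp only [ContinuousMap.coe_mk, Complex.norm_real, Real.norm_eq_abs]
    rw [abs_le]
    constructor <;> linarith [unitInterval.nonneg (g z), unitInterval.le_one (g z)]
  · simp [hgU hz]

end PeakFunctions

namespace Holsztynski

variable {X Y : Type*} [TopologicalSpace X] [CompactSpace X] [TopologicalSpace Y]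
  [CompactSpace Y] (T : C(X, ℂ) →ₗᵢ[ℂ] C(Y, ℂ))

include T in
theorem nonempty_of_linearIsometry [Nonempty X] : Nonempty Y := by
  by_contra hY
  rw [not_nonempty_iff] at hY
  have hT : T 1 = 0 := ContinuousMap.ext isEmptyElim
  simpa [hT] using T.norm_map 1

theorem norm_apply_le_one (f : C(X, ℂ)) (hf : ‖f‖ ≤ 1) (y : Y) : ‖T f y‖ ≤ 1 :=
  ((T f).norm_coe_le_norm y).trans (T.norm_map f ▸ hf)

theorem apply_eq_and_norm_eq_one_of_norm_apply_smul_add {f g : C(X, ℂ)} (hf : ‖f‖ ≤ 1)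
    (hg : ‖g‖ ≤ 1) {y : Y} (hy : ‖T ((2⁻¹ : ℂ) • (f + g)) y‖ = 1) :
    T f y = T g y ∧ ‖T f y‖ = 1 := by
  refine eq_and_norm_eq_one_of_norm_add_eq_two (norm_apply_le_one T f hf y)
    (norm_apply_le_one T g hg y) ?_
  simp only [map_smul, map_add, ContinuousMap.smul_apply, ContinuousMap.add_apply, smul_eq_mul,
    norm_mul, norm_inv, Complex.norm_two] at hy
  linarith

theorem exists_forall_apply_eq_apply_one_of_mem_peakFunctions (x : X) :
    ∃ y, ‖T 1 y‖ = 1 ∧ ∀ f ∈ peakFunctions x, T f y = T 1 y := by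
  have : Nonempty X := ⟨x⟩
  have := nonempty_of_linearIsometry T
  have : Nonempty (peakFunctions x) := ⟨⟨1, one_mem_peakFunctions x⟩⟩
  let M : peakFunctions x → Set Y := fun f ↦ {y | ‖T f y‖ = 1}
  have hM_closed (f) : IsClosed (M f) := isClosed_eq (by fun_prop) continuous_const
  have hM_nonempty (f : peakFunctions x) : (M f).Nonempty := by
    obtain ⟨y, hy⟩ := (T f).exists_norm_apply_eq_norm
    exact ⟨y, hy.trans (by rw [T.norm_map, norm_eq_one_of_mem_peakFunctions f.2])⟩
  have hmid {f g : C(X, ℂ)} (hf : f ∈ peakFunctions x) (hg : g ∈ peakFunctions x) {y : Y}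
      (hy : y ∈ M ⟨_, smul_add_mem_peakFunctions hf hg⟩) : T f y = T g y ∧ ‖T f y‖ = 1 :=
    apply_eq_and_norm_eq_one_of_norm_apply_smul_add T (norm_eq_one_of_mem_peakFunctions hf).le
      (norm_eq_one_of_mem_peakFunctions hg).le hy
  have hM_directed : Directed (· ⊇ ·) M := by
    rintro ⟨f, hf⟩ ⟨g, hg⟩
    refine ⟨⟨_, smul_add_mem_peakFunctions hf hg⟩, fun y hy ↦ (hmid hf hg hy).2, fun y hy ↦ ?_⟩
    obtain ⟨hfg, hf₁⟩ := hmid hf hg hy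
    show ‖T g y‖ = 1
    rwa [← hfg]
  obtain ⟨y, hy⟩ := IsCompact.nonempty_iInter_of_directed_nonempty_isCompact_isClosed M
    hM_directed hM_nonempty (fun f ↦ (hM_closed f).isCompact) hM_closed
  rw [mem_iInter] at hy
  exact ⟨y, hy ⟨1, one_mem_peakFunctions x⟩,
    fun f hf ↦ (hmid hf (one_mem_peakFunctions x) (hy ⟨_, _⟩)).1⟩

def weightedCompositionGraph : Set (X × Y) :=
  {p | ‖T 1 p.2‖ = 1 ∧ ∀ f : C(X, ℂ), T f p.2 = T 1 p.2 * f p.1}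

theorem isClosed_weightedCompositionGraph : IsClosed (weightedCompositionGraph T) := by
  rw [weightedCompositionGraph, ofPred_and, ofPred_forall]
  exact (isClosed_eq (by fun_prop) continuous_const).inter
    (isClosed_iInter fun f ↦ isClosed_eq (by fun_prop) (by fun_prop))

theorem injOn_snd_weightedCompositionGraph [T35Space X] :
    InjOn Prod.snd (weightedCompositionGraph T) := by
  rintro ⟨x, y⟩ ⟨hy₁, hx⟩ ⟨x', y'⟩ ⟨-, hx'⟩ (rfl : y = y')
  refine Prod.ext ?_ rfl
  by_contra hxx'
  obtain ⟨h, hh, hh₀⟩ := exists_mem_peakFunctions_eqOn_compl_zero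
    (isOpen_compl_singleton (x := x')) hxx'
  have := (hx h).symm.trans (hx' h)
  rw [hh.1, hh₀ (by simp), Pi.zero_apply, mul_one, mul_zero] at this
  exact (norm_ne_zero_iff.1 (hy₁.trans_ne one_ne_zero)) this

variable [CompletelyRegularSpace X] {x : X} {y : Y}

/- Test `f` against `h + c • f`, where `h` is a peak function at `x` supported where `|f|` is
small and the phase of `c` aligns `c * T f y` with `T 1 y`: at `y` the modulus is `1 + ‖T f y‖²`,
while the sup norm is at most `1 + ‖T f y‖ ε`. -/
theorem apply_eq_zero_of_norm_le_one (hy₁ : ‖T 1 y‖ = 1)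
    (hy : ∀ h ∈ peakFunctions x, T h y = T 1 y) {f : C(X, ℂ)} (hf : ‖f‖ ≤ 1) (hfx : f x = 0) :
    T f y = 0 := by
  set a := T f y
  by_contra ha
  have ha₀ : 0 < ‖a‖ := norm_pos_iff.2 ha
  set ε := ‖a‖ / 2 with hε
  obtain ⟨h, hh, hh₀⟩ := exists_mem_peakFunctions_eqOn_compl_zero (x := x)
    (isOpen_lt (by fun_prop) continuous_const : IsOpen {z | ‖f z‖ < ε}) (by simp [hfx, ε, ha₀])
  set c := T 1 y * starRingEnd ℂ a
  have hc : ‖c‖ = ‖a‖ := by simp [c, hy₁]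
  have hval : ‖T (h + c • f) y‖ = 1 + ‖a‖ ^ 2 := by
    have : T (h + c • f) y = T 1 y * ((1 + ‖a‖ ^ 2 : ℝ) : ℂ) := by
      simp only [map_add, map_smul, ContinuousMap.add_apply, ContinuousMap.smul_apply, smul_eq_mul,
        hy h hh, c]
      push_cast
      rw [← Complex.conj_mul']
      ring
    rw [this, norm_mul, hy₁, one_mul, Complex.norm_real, Real.norm_of_nonneg (by positivity)]
  have hnorm : ‖h + c • f‖ ≤ 1 + ‖a‖ * ε := by
    refine (ContinuousMap.norm_le _ (by positivity)).2 fun z ↦ ?_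
    simp only [ContinuousMap.add_apply, ContinuousMap.smul_apply, smul_eq_mul]
    by_cases hz : ‖f z‖ < ε
    · calc ‖h z + c * f z‖ ≤ ‖h z‖ + ‖c‖ * ‖f z‖ := (norm_add_le _ _).trans_eq (by rw [norm_mul])
        _ ≤ 1 + ‖a‖ * ε := by rw [hc]; gcongr; exact hh.2 z
    · have hfz : ‖f z‖ ≤ 1 := (f.norm_coe_le_norm z).trans hf
      have ha₁ : ‖a‖ ≤ 1 := norm_apply_le_one T f hf y
      rw [hh₀ hz, Pi.zero_apply, zero_add, norm_mul, hc]
      linarith [mul_le_one₀ ha₁ (norm_nonneg _) hfz, mul_nonneg ha₀.le (by positivity : 0 ≤ ε)]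
  have := calc 1 + ‖a‖ ^ 2 = ‖T (h + c • f) y‖ := hval.symm
    _ ≤ ‖h + c • f‖ := ((T _).norm_coe_le_norm y).trans_eq (T.norm_map _)
    _ ≤ 1 + ‖a‖ * ε := hnorm
  nlinarith [hε]

theorem apply_eq_mul_of_forall_peakFunctions (hy₁ : ‖T 1 y‖ = 1)
    (hy : ∀ h ∈ peakFunctions x, T h y = T 1 y) (f : C(X, ℂ)) : T f y = T 1 y * f x := by
  set g := f - f x • (1 : C(X, ℂ))
  set s : ℂ := (((‖g‖ + 1)⁻¹ : ℝ) : ℂ)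
  have hs : s ≠ 0 := by simp only [s, ne_eq, Complex.ofReal_eq_zero]; positivity
  have hsg : ‖s • g‖ ≤ 1 := by
    rw [norm_smul, Complex.norm_real, Real.norm_of_nonneg (by positivity),
      inv_mul_le_one₀ (by positivity)]
    linarith
  have hzero := apply_eq_zero_of_norm_le_one T hy₁ hy hsg (by simp [g])
  simpa [g, hs, sub_eq_zero, mul_comm] using hzero

theorem exists_mem_weightedCompositionGraph (x : X) :
    ∃ y, (x, y) ∈ weightedCompositionGraph T := by
  obtain ⟨y, hy₁, hy⟩ := exists_forall_apply_eq_apply_one_of_mem_peakFunctions T x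
  exact ⟨y, hy₁, apply_eq_mul_of_forall_peakFunctions T hy₁ hy⟩

end Holsztynski

open Holsztynski

/-- **Holsztyński's theorem.** If `X` and `Y` are compact Hausdorff spaces and
`T : C(X) → C(Y)` is a (not necessarily surjective) linear isometry of the Banach spaces of
continuous complex-valued functions with the sup norm, then there are a nonempty closed subset
`Y₀ ⊆ Y`, a continuous surjection `t : Y₀ → X` and a continuous unimodular weight
`w : Y₀ → ℂ` such that `(T f) y = w y * f (t y)` for every `y ∈ Y₀` and `f ∈ C(X)`. -/
theorem holsztynski {X Y : Type*} [TopologicalSpace X] [CompactSpace X] [T2Space X] [Nonempty X]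
    [TopologicalSpace Y] [CompactSpace Y] [T2Space Y]
    (T : C(X, ℂ) →ₗᵢ[ℂ] C(Y, ℂ)) :
    ∃ Y₀ : Set Y, Y₀.Nonempty ∧ IsClosed Y₀ ∧
      ∃ (t : Y₀ → X) (w : Y₀ → ℂ),
        Continuous t ∧ Function.Surjective t ∧
        Continuous w ∧ (∀ y : Y₀, ‖w y‖ = 1) ∧
        ∀ (f : C(X, ℂ)) (y : Y₀), T f (y : Y) = w y * f (t y) := by
  set K := weightedCompositionGraph T
  have hK : IsCompact K := (isClosed_weightedCompositionGraph T).isCompact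
  have hinj := injOn_snd_weightedCompositionGraph T
  obtain ⟨t, ht, htK⟩ := hK.exists_continuous_fst_of_injOn_snd hinj
  have ht_surj : Function.Surjective t := fun x ↦ by
    obtain ⟨y, hxy⟩ := exists_mem_weightedCompositionGraph T x
    exact ⟨⟨y, mem_image_of_mem _ hxy⟩, congrArg Prod.fst (hinj (htK _) hxy rfl)⟩
  obtain ⟨y, -⟩ := ht_surj (Classical.arbitrary X)
  exact ⟨Prod.snd '' K, ⟨y, y.2⟩, (hK.image continuous_snd).isClosed, t, fun y ↦ T 1 y,
    ht, ht_surj, by fun_prop, fun y ↦ (htK y).1, fun f y ↦ (htK y).2 f⟩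
end

section
/- Let G and H be locally compact Hausdorff maximally almost periodic groups and let T : AP(G) → AP(H) be a non-vanishing linear isometry that respects finite-dimensional unitary representations. Then for every f ∈ AP(G): there exists x ∈ G with ‖f‖ = |f(x)| if and only if there exists y ∈ H with ‖Tf‖ = |(Tf)(y)|. -/
open scoped BoundedContinuousFunction

noncomputable section

/-- A complex-valued function on a group is *almost periodic* if for every `ε > 0` there is a
finite cover `G = G₁ ∪ … ∪ Gₙ` with `|f (z*x*w) - f (z*y*w)| < ε` whenever `x, y` lie in a
common member of the cover. -/
def IsAlmostPeriodic {G : Type*} [Group G] (f : G → ℂ) : Prop :=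
  ∀ ε : ℝ, 0 < ε → ∃ (n : ℕ) (S : Fin n → Set G),
    (⋃ i, S i) = (Set.univ : Set G) ∧
    ∀ (i : Fin n), ∀ z w x y : G, x ∈ S i → y ∈ S i →
      ‖f (z * x * w) - f (z * y * w)‖ < ε

/-- A continuous finite-dimensional unitary representation, in matrix form. -/
def IsUnitaryRep {G : Type*} [Group G] [TopologicalSpace G] (n : ℕ)
    (D : G → Matrix (Fin n) (Fin n) ℂ) : Prop :=
  Continuous D ∧ (∀ g, D g ∈ Matrix.unitaryGroup (Fin n) ℂ) ∧
    ∀ a b : G, D (a * b) = D a * D b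

/-- Maximal almost periodicity: continuous finite-dimensional unitary representations separate
points. -/
def MAPGroup (G : Type*) [Group G] [TopologicalSpace G] : Prop :=
  ∀ ⦃x y : G⦄, x ≠ y → ∃ (n : ℕ) (D : G → Matrix (Fin n) (Fin n) ℂ),
    IsUnitaryRep n D ∧ D x ≠ D y

/-- `T` respects (finite-dimensional) unitary representations: for every continuous
homomorphism `D = (d_{jk})` of `G` into `U(n)`, the matrix `(T d_{jk})` defines a continuous
homomorphism of `H` into `U(n)`. -/
def RespectsUnitaryRepsB {G H : Type*} [Group G] [TopologicalSpace G]
    [Group H] [TopologicalSpace H] (T : (G →ᵇ ℂ) → (H →ᵇ ℂ)) : Prop :=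
  ∀ (n : ℕ) (d : Matrix (Fin n) (Fin n) (G →ᵇ ℂ)),
    (∀ g : G, (Matrix.of fun j k => d j k g) ∈ Matrix.unitaryGroup (Fin n) ℂ) →
    (∀ a b : G, (Matrix.of fun j k => d j k (a * b)) =
      (Matrix.of fun j k => d j k a) * (Matrix.of fun j k => d j k b)) →
    (∀ h : H, (Matrix.of fun j k => T (d j k) h) ∈ Matrix.unitaryGroup (Fin n) ℂ) ∧
    (∀ a b : H, (Matrix.of fun j k => T (d j k) (a * b)) =
      (Matrix.of fun j k => T (d j k) a) * (Matrix.of fun j k => T (d j k) b))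

/-!
The constant `1` is a one-dimensional unitary representation of `G`, so `T 1` is unimodular.
Applying the non-vanishing property to `f - c • 1` shows that `f` takes the value `c` somewhere
iff `T f = c • T 1` somewhere. Since `‖T f‖ = ‖f‖`, both sides of the theorem say that this
happens for some `c` with `‖c‖ = ‖f‖`.
-/

lemma Matrix.norm_apply_eq_one_of_mem_unitaryGroup {𝕜 : Type*} [RCLike 𝕜]
    {A : Matrix (Fin 1) (Fin 1) 𝕜} (hA : A ∈ Matrix.unitaryGroup (Fin 1) 𝕜) : ‖A 0 0‖ = 1 := by
  have h := congrFun₂ (Matrix.mem_unitaryGroup_iff.mp hA) 0 0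
  simp only [Matrix.mul_apply, Matrix.star_apply, Fin.sum_univ_one, Matrix.one_apply_eq,
    RCLike.star_def, RCLike.mul_conj] at h
  exact (pow_eq_one_iff_of_nonneg (norm_nonneg _) two_ne_zero).mp (by exact_mod_cast h)

lemma IsAlmostPeriodic.congr {G : Type*} [Group G] {f g : G → ℂ} (hf : IsAlmostPeriodic f)
    (h : ∀ x, f x = g x) : IsAlmostPeriodic g := by
  simpa only [funext h] using hf

lemma isAlmostPeriodic_const {G : Type*} [Group G] (c : ℂ) :
    IsAlmostPeriodic fun _ : G => c :=
  fun ε hε => ⟨1, fun _ => Set.univ, Set.iUnion_const _, fun _ _ _ _ _ _ _ => by simpa using hε⟩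

lemma IsAlmostPeriodic.add_const {G : Type*} [Group G] {f : G → ℂ} (hf : IsAlmostPeriodic f)
    (c : ℂ) : IsAlmostPeriodic fun x => f x + c := by
  intro ε hε
  obtain ⟨n, S, hcover, hS⟩ := hf ε hε
  exact ⟨n, S, hcover, fun i z w x y hx hy => by simpa using hS i z w x y hx hy⟩

lemma exists_norm_eq_iff_exists_eq_mul {X 𝕜 : Type*} [NormedDivisionRing 𝕜] {u w : X → 𝕜}
    (hw : ∀ x, ‖w x‖ = 1) (r : ℝ) :
    (∃ x, r = ‖u x‖) ↔ ∃ c : 𝕜, ‖c‖ = r ∧ ∃ x, u x = c * w x := by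
  constructor
  · rintro ⟨x, rfl⟩
    have hwx : w x ≠ 0 := norm_ne_zero_iff.mp (by rw [hw x]; exact one_ne_zero)
    exact ⟨u x * (w x)⁻¹, by simp [hw x], x, by rw [inv_mul_cancel_right₀ hwx]⟩
  · rintro ⟨c, rfl, x, hx⟩
    exact ⟨x, by rw [hx, norm_mul, hw x, mul_one]⟩

section Transfer

variable {G H : Type*} [Group G] [TopologicalSpace G] [TopologicalSpace H]
  {T : (G →ᵇ ℂ) → (H →ᵇ ℂ)}

lemma RespectsUnitaryRepsB.norm_apply_one [Group H] (hT : RespectsUnitaryRepsB T) (y : H) :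
    ‖T 1 y‖ = 1 := by
  have hone : ∀ g : G,
      (Matrix.of fun j k => (Matrix.of fun (_ _ : Fin 1) => (1 : G →ᵇ ℂ)) j k g) = 1 := by
    intro g
    ext i j
    rw [Subsingleton.elim i j]; simp
  have hU := (hT 1 _ (fun g => hone g ▸ one_mem _)
    (fun a b => by rw [hone, hone, hone, one_mul])).1 y
  exact Matrix.norm_apply_eq_one_of_mem_unitaryGroup hU

lemma exists_map_eq_mul_map_one_iff
    (hTadd : ∀ f g : G →ᵇ ℂ, IsAlmostPeriodic ⇑f → IsAlmostPeriodic ⇑g →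
      T (f + g) = T f + T g)
    (hTsmul : ∀ (c : ℂ) (f : G →ᵇ ℂ), IsAlmostPeriodic ⇑f → T (c • f) = c • T f)
    (hTnv : ∀ f : G →ᵇ ℂ, IsAlmostPeriodic ⇑f →
      ((∀ y : H, T f y ≠ 0) ↔ ∀ x : G, f x ≠ 0))
    {f : G →ᵇ ℂ} (hf : IsAlmostPeriodic ⇑f) (c : ℂ) :
    (∃ y, T f y = c * T 1 y) ↔ ∃ x, f x = c := by
  have hone : IsAlmostPeriodic ⇑(1 : G →ᵇ ℂ) := isAlmostPeriodic_const 1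
  have hshift : IsAlmostPeriodic ⇑(f + (-c) • 1) := (hf.add_const (-c)).congr fun x => by simp
  have hT : T (f + (-c) • 1) = T f + (-c) • T 1 := by
    rw [hTadd _ _ hf ((isAlmostPeriodic_const (-c)).congr fun x => by simp), hTsmul _ _ hone]
  have hzeros := not_congr (hTnv _ hshift)
  push Not at hzeros
  simp only [hT, BoundedContinuousFunction.add_apply, BoundedContinuousFunction.smul_apply,
    BoundedContinuousFunction.coe_one, Pi.one_apply, smul_eq_mul, neg_mul, mul_one,
    ← sub_eq_add_neg, sub_eq_zero] at hzeros
  exact hzeros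

end Transfer

theorem norm_attained_iff_norm_attained_general
    {G H : Type*} [Group G] [TopologicalSpace G]
    [Group H] [TopologicalSpace H]
    (T : (G →ᵇ ℂ) → (H →ᵇ ℂ))
    (hTadd : ∀ f g : G →ᵇ ℂ, IsAlmostPeriodic ⇑f → IsAlmostPeriodic ⇑g →
      T (f + g) = T f + T g)
    (hTsmul : ∀ (c : ℂ) (f : G →ᵇ ℂ), IsAlmostPeriodic ⇑f → T (c • f) = c • T f)
    (hTiso : ∀ f : G →ᵇ ℂ, IsAlmostPeriodic ⇑f → ‖T f‖ = ‖f‖)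
    (hTnv : ∀ f : G →ᵇ ℂ, IsAlmostPeriodic ⇑f →
      ((∀ y : H, T f y ≠ 0) ↔ ∀ x : G, f x ≠ 0))
    (hTrep : RespectsUnitaryRepsB T) :
    ∀ f : G →ᵇ ℂ, IsAlmostPeriodic ⇑f →
      ((∃ x : G, ‖f‖ = ‖f x‖) ↔ ∃ y : H, ‖T f‖ = ‖T f y‖) := by
  intro f hf
  rw [exists_norm_eq_iff_exists_eq_mul (w := fun _ : G => (1 : ℂ)) (fun _ => norm_one),
    exists_norm_eq_iff_exists_eq_mul hTrep.norm_apply_one, hTiso f hf]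
  simp only [mul_one]
  exact exists_congr fun c => and_congr_right fun _ =>
    (exists_map_eq_mul_map_one_iff hTadd hTsmul hTnv hf c).symm

/-- Let `G`, `H` be locally compact Hausdorff maximally almost periodic groups and let
`T : AP(G) → AP(H)` be a non-vanishing linear isometry respecting finite-dimensional unitary
representations. Then for every `f ∈ AP(G)`: `‖f‖ = |f x|` for some `x ∈ G` iff
`‖T f‖ = |(T f) y|` for some `y ∈ H`. -/
theorem norm_attained_iff_norm_attained
    {G H : Type*} [Group G] [TopologicalSpace G] [IsTopologicalGroup G]
    [LocallyCompactSpace G] [T2Space G]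
    [Group H] [TopologicalSpace H] [IsTopologicalGroup H]
    [LocallyCompactSpace H] [T2Space H]
    (hGmap : MAPGroup G) (hHmap : MAPGroup H)
    (T : (G →ᵇ ℂ) → (H →ᵇ ℂ))
    (hTap : ∀ f : G →ᵇ ℂ, IsAlmostPeriodic ⇑f → IsAlmostPeriodic ⇑(T f))
    (hTadd : ∀ f g : G →ᵇ ℂ, IsAlmostPeriodic ⇑f → IsAlmostPeriodic ⇑g →
      T (f + g) = T f + T g)
    (hTsmul : ∀ (c : ℂ) (f : G →ᵇ ℂ), IsAlmostPeriodic ⇑f → T (c • f) = c • T f)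
    (hTiso : ∀ f : G →ᵇ ℂ, IsAlmostPeriodic ⇑f → ‖T f‖ = ‖f‖)
    (hTnv : ∀ f : G →ᵇ ℂ, IsAlmostPeriodic ⇑f →
      ((∀ y : H, T f y ≠ 0) ↔ ∀ x : G, f x ≠ 0))
    (hTrep : RespectsUnitaryRepsB T) :
    ∀ f : G →ᵇ ℂ, IsAlmostPeriodic ⇑f →
      ((∃ x : G, ‖f‖ = ‖f x‖) ↔ ∃ y : H, ‖T f‖ = ‖T f y‖) :=
  norm_attained_iff_norm_attained_general T hTadd hTsmul hTiso hTnv hTrep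

end
end

section
/- Let G and H be σ-compact maximally almost periodic locally compact Hausdorff groups, and suppose T : AP(G) → AP(H) is a non-vanishing linear isometry of AP(G) onto AP(H) that respects finite-dimensional unitary representations. Then there exist a topological group isomorphism t : H → G and a continuous character γ ∈ Ĥ such that (Tf)(h) = γ(h)·f(t(h)) for all h ∈ H and all f ∈ AP(G). -/
open scoped BoundedContinuousFunction

noncomputable section

/-- A continuous character: a continuous homomorphism into the circle group `𝕋 ⊆ ℂ`. -/
def IsCharacter {H : Type*} [Group H] [TopologicalSpace H] (γ : H → ℂ) : Prop :=
  Continuous γ ∧ (∀ h, ‖γ h‖ = 1) ∧ ∀ a b : H, γ (a * b) = γ a * γ b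

/-- The Bohr topology on a topological group: the initial topology induced by the family of all
continuous finite-dimensional unitary representations. -/
def bohrTopology (G : Type*) [Group G] [TopologicalSpace G] : TopologicalSpace G :=
  ⨅ (n : ℕ) (D : {D : G → Matrix (Fin n) (Fin n) ℂ // IsUnitaryRep n D}),
    TopologicalSpace.induced D.1 inferInstance

/-- A topological group respects compactness if every subset compact in the Bohr topology is
compact in the original topology. -/
def RespectsCompactness (G : Type*) [Group G] [TopologicalSpace G] : Prop :=
  ∀ s : Set G, @IsCompact G (bohrTopology G) s → IsCompact s

universe u
/-- A space is realcompact if it admits a closed embedding into a product of copies of `ℝ`. -/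
def IsRealcompact (X : Type u) (τ : TopologicalSpace X) : Prop :=
  ∃ (ι : Type u) (f : X → ι → ℝ), @Topology.IsClosedEmbedding X (ι → ℝ) τ inferInstance f

/-!
For `h ∈ H`, the functional `f ↦ (T f)(h) / (T 1)(h)` on `AP(G)` takes, on every `f`, one of the
values of `f`: apply non-vanishing to `f - c`. A Gleason–Kahane–Żelazko argument (positivity,
Cauchy–Schwarz, and a decomposition of every function into unimodular ones) makes such a functional
multiplicative, and σ-compactness then makes it the evaluation at a point `t h`: otherwise
countably many functions in its kernel would have no common zero, and a weighted sum of their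
squared moduli would be a nowhere vanishing function in the kernel. Hence `T f = T 1 · (f ∘ t)`.
The same argument for `T⁻¹` makes `t` bijective, applying `T` to the coefficients of unitary
representations makes `t` and `T 1` multiplicative, and the graph of `t` is closed, so the open
mapping theorem for σ-compact locally compact groups makes `t` a homeomorphism.
-/

open Set Function BoundedContinuousFunction

theorem MonoidHom.continuous_of_isClosed_graph {G H : Type*} [Group G] [TopologicalSpace G]
    [IsTopologicalGroup G] [BaireSpace G] [T2Space G] [SigmaCompactSpace G]
    [Group H] [TopologicalSpace H] [IsTopologicalGroup H] [SigmaCompactSpace H]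
    (f : G →* H) (hf : IsClosed (f.graph : Set (G × H))) : Continuous f := by
  have := hf.sigmaCompactSpace
  let p : f.graph →* G := (MonoidHom.fst G H).comp f.graph.subtype
  have hp : Continuous p := continuous_fst.comp continuous_subtype_val
  have hbij : Bijective p := by
    refine ⟨fun a b hab => Subtype.ext (Prod.ext hab ?_), fun x => ⟨⟨(x, f x), rfl⟩, rfl⟩⟩
    rw [← a.2, ← b.2]
    exact congrArg f hab
  let e := (Equiv.ofBijective p hbij).toHomeomorphOfContinuousOpen hp
    (p.isOpenMap_of_sigmaCompact hbij.2 hp)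
  have : ⇑f = fun x => ((e.symm x : f.graph) : G × H).2 := funext fun x => by
    rw [← (e.symm x).2]
    exact congrArg f (e.apply_symm_apply x).symm
  rw [this]
  exact continuous_snd.comp (continuous_subtype_val.comp e.symm.continuous)

namespace IsAlmostPeriodic

variable {G : Type*} [Group G] {f g : G → ℂ}

theorem of_finite_cover
    (h : ∀ ε : ℝ, 0 < ε → ∃ (ι : Type*) (_ : Finite ι) (S : ι → Set G), (⋃ i, S i) = univ ∧
      ∀ i, ∀ z w x y : G, x ∈ S i → y ∈ S i → ‖f (z * x * w) - f (z * y * w)‖ < ε) :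
    IsAlmostPeriodic f := by
  intro ε hε
  obtain ⟨ι, _, S, hcover, hosc⟩ := h ε hε
  obtain ⟨n, ⟨e⟩⟩ := Finite.exists_equiv_fin ι
  refine ⟨n, fun i => S (e.symm i), ?_, fun i => hosc (e.symm i)⟩
  rwa [e.symm.surjective.iUnion_comp S]

theorem const (c : ℂ) : IsAlmostPeriodic fun _ : G => c :=
  fun ε hε => ⟨1, fun _ => univ, iUnion_const _, fun _ _ _ _ _ _ _ => by simpa using hε⟩

theorem comp₂ (hf : IsAlmostPeriodic f) (hg : IsAlmostPeriodic g) {M : ℝ}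
    (hfM : ∀ x, ‖f x‖ ≤ M) (hgM : ∀ x, ‖g x‖ ≤ M) {φ : ℂ → ℂ → ℂ}
    (hφ : Continuous (uncurry φ)) : IsAlmostPeriodic fun x => φ (f x) (g x) := by
  have hmem : ∀ x, (f x, g x) ∈ Metric.closedBall (0 : ℂ) M ×ˢ Metric.closedBall (0 : ℂ) M :=
    fun x => ⟨by simpa using hfM x, by simpa using hgM x⟩
  refine of_finite_cover fun ε hε => ?_
  obtain ⟨δ, hδ, hφδ⟩ := Metric.uniformContinuousOn_iff.1
    (((isCompact_closedBall _ _).prod (isCompact_closedBall _ _)).uniformContinuousOn_of_continuous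
      hφ.continuousOn) ε hε
  obtain ⟨n, Sf, hSf, hf⟩ := hf δ hδ
  obtain ⟨m, Sg, hSg, hg⟩ := hg δ hδ
  refine ⟨Fin n × Fin m, inferInstance, fun p => Sf p.1 ∩ Sg p.2, ?_, ?_⟩
  · refine eq_univ_of_forall fun x => ?_
    obtain ⟨i, hi⟩ := mem_iUnion.1 (hSf ▸ mem_univ x)
    obtain ⟨j, hj⟩ := mem_iUnion.1 (hSg ▸ mem_univ x)
    exact mem_iUnion.2 ⟨(i, j), hi, hj⟩
  · rintro ⟨i, j⟩ z w x y ⟨hxi, hxj⟩ ⟨hyi, hyj⟩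
    rw [← dist_eq_norm]
    refine hφδ _ (hmem _) _ (hmem _) ?_
    rw [Prod.dist_eq, max_lt_iff, dist_eq_norm, dist_eq_norm]
    exact ⟨hf i z w x y hxi hyi, hg j z w x y hxj hyj⟩

theorem comp (hf : IsAlmostPeriodic f) {M : ℝ} (hfM : ∀ x, ‖f x‖ ≤ M) {φ : ℂ → ℂ}
    (hφ : Continuous φ) : IsAlmostPeriodic fun x => φ (f x) :=
  comp₂ (φ := fun a _ => φ a) hf hf hfM hfM (hφ.comp continuous_fst)

theorem of_totallyBounded {X : Type*} [PseudoMetricSpace X] {Φ : G → X}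
    (hΦ : TotallyBounded (range Φ))
    (h : ∀ ε : ℝ, 0 < ε → ∃ δ > 0, ∀ x y : G, dist (Φ x) (Φ y) < δ →
      ∀ z w : G, ‖f (z * x * w) - f (z * y * w)‖ < ε) :
    IsAlmostPeriodic f := by
  refine of_finite_cover fun ε hε => ?_
  obtain ⟨δ, hδ, hfδ⟩ := h ε hε
  obtain ⟨c, hc, hcover⟩ := Metric.totallyBounded_iff.1 hΦ (δ / 2) (half_pos hδ)
  refine ⟨c, hc.to_subtype, fun a => Φ ⁻¹' Metric.ball a (δ / 2), ?_, ?_⟩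
  · refine eq_univ_of_forall fun x => ?_
    obtain ⟨a, ha, hxa⟩ := mem_iUnion₂.1 (hcover (mem_range_self x))
    exact mem_iUnion.2 ⟨⟨a, ha⟩, hxa⟩
  · intro a z w x y hx hy
    refine hfδ x y ?_ z w
    calc dist (Φ x) (Φ y) ≤ dist (Φ x) a + dist (Φ y) a := dist_triangle_right _ _ _
      _ < δ / 2 + δ / 2 := add_lt_add hx hy
      _ = δ := add_halves δ

end IsAlmostPeriodic

section apSubalgebra

variable (K : Type*) [Group K] [TopologicalSpace K]

/-- `AP(K)`, as a star subalgebra of `K →ᵇ ℂ`. -/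
def apSubalgebra : StarSubalgebra ℂ (K →ᵇ ℂ) where
  carrier := {f | IsAlmostPeriodic ⇑f}
  mul_mem' {f g} hf hg := IsAlmostPeriodic.comp₂ (φ := (· * ·)) hf hg
    (fun x => (f.norm_coe_le_norm x).trans (le_max_left ‖f‖ ‖g‖))
    (fun x => (g.norm_coe_le_norm x).trans (le_max_right ‖f‖ ‖g‖)) continuous_mul
  add_mem' {f g} hf hg := IsAlmostPeriodic.comp₂ (φ := (· + ·)) hf hg
    (fun x => (f.norm_coe_le_norm x).trans (le_max_left ‖f‖ ‖g‖))
    (fun x => (g.norm_coe_le_norm x).trans (le_max_right ‖f‖ ‖g‖)) continuous_add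
  algebraMap_mem' c := IsAlmostPeriodic.const c
  star_mem' {f} hf := hf.comp f.norm_coe_le_norm Complex.continuous_conj

instance : CoeFun (apSubalgebra K) fun _ => K → ℂ := ⟨fun f => ⇑(f : K →ᵇ ℂ)⟩

variable {K}

theorem isClosed_apSubalgebra : IsClosed (apSubalgebra K : Set (K →ᵇ ℂ)) := by
  refine isClosed_of_closure_subset fun f hf ε hε => ?_
  obtain ⟨g, hg, hfg⟩ := Metric.mem_closure_iff.1 hf (ε / 3) (by positivity)
  obtain ⟨n, S, hS, hosc⟩ := hg (ε / 3) (by positivity)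
  refine ⟨n, S, hS, fun i z w x y hx hy => ?_⟩
  have hclose : ∀ a, ‖f a - g a‖ < ε / 3 := fun a =>
    (dist_eq_norm (f a) (g a)).symm.trans_le (dist_coe_le_dist a) |>.trans_lt hfg
  calc ‖f (z * x * w) - f (z * y * w)‖
      = ‖(f (z * x * w) - g (z * x * w)) + (g (z * x * w) - g (z * y * w))
        - (f (z * y * w) - g (z * y * w))‖ := by ring_nf
    _ ≤ ‖f (z * x * w) - g (z * x * w)‖ + ‖g (z * x * w) - g (z * y * w)‖
        + ‖f (z * y * w) - g (z * y * w)‖ :=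
      (norm_sub_le _ _).trans (add_le_add_left (norm_add_le _ _) _)
    _ < ε / 3 + ε / 3 + ε / 3 := by gcongr; exacts [hclose _, hosc i z w x y hx hy, hclose _]
    _ = ε := by ring

instance : CompleteSpace (apSubalgebra K) := isClosed_apSubalgebra.completeSpace_coe

theorem apSubalgebra.exists_comp (f : apSubalgebra K) {φ : ℂ → ℂ} (hφ : Continuous φ) :
    ∃ g : apSubalgebra K, ∀ x, g x = φ (f x) := by
  obtain ⟨C, hC⟩ := (isCompact_closedBall (0 : ℂ) ‖f‖).exists_bound_of_continuousOn
    hφ.continuousOn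
  have hf : ∀ x, ‖(f : K →ᵇ ℂ) x‖ ≤ ‖f‖ := (f : K →ᵇ ℂ).norm_coe_le_norm
  exact ⟨⟨ofNormedAddCommGroup _ (hφ.comp (f : K →ᵇ ℂ).continuous) C
    fun x => hC _ (by simpa using hf x), f.2.comp hf hφ⟩, fun _ => rfl⟩


end apSubalgebra

theorem Matrix.norm_mul_mul_apply_sub_le {ι : Type*} [Fintype ι] [DecidableEq ι]
    {A B X Y : Matrix ι ι ℂ} (hA : A ∈ Matrix.unitaryGroup ι ℂ) (hB : B ∈ Matrix.unitaryGroup ι ℂ)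
    {δ : ℝ} (hXY : ∀ p q, ‖X p q - Y p q‖ ≤ δ) (j k : ι) :
    ‖(A * X * B) j k - (A * Y * B) j k‖ ≤ Fintype.card ι ^ 2 * δ := by
  rw [← Matrix.sub_apply, ← sub_mul, ← mul_sub, Matrix.mul_apply]
  calc ‖∑ q, (A * (X - Y)) j q * B q k‖
      ≤ ∑ q, ∑ p, ‖A j p‖ * ‖X p q - Y p q‖ * ‖B q k‖ := by
        refine (norm_sum_le _ _).trans (Finset.sum_le_sum fun q _ => ?_)
        rw [norm_mul, Matrix.mul_apply, ← Finset.sum_mul]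
        gcongr
        exact (norm_sum_le _ _).trans_eq (by simp [Matrix.sub_apply])
    _ ≤ ∑ _q : ι, ∑ _p : ι, 1 * δ * 1 := by
        gcongr with q _ p _
        · simpa using (norm_nonneg _).trans (hXY p q)
        · exact entry_norm_bound_of_unitary hA j p
        · exact hXY p q
        · exact entry_norm_bound_of_unitary hB q k
    _ = Fintype.card ι ^ 2 * δ := by simp [sq, mul_assoc]

section UnitaryRep

variable {G : Type*} [Group G] {n : ℕ} {D : G → Matrix (Fin n) (Fin n) ℂ}

theorem isAlmostPeriodic_apply_of_unitary (hU : ∀ g, D g ∈ Matrix.unitaryGroup (Fin n) ℂ)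
    (hM : ∀ a b : G, D (a * b) = D a * D b) (j k : Fin n) :
    IsAlmostPeriodic fun g => D g j k := by
  have hbound : ∀ g, ‖(Matrix.of.symm (D g) : Fin n → Fin n → ℂ)‖ ≤ 1 := fun g =>
    (pi_norm_le_iff_of_nonneg zero_le_one).2 fun p =>
      (pi_norm_le_iff_of_nonneg zero_le_one).2 fun q => entry_norm_bound_of_unitary (hU g) p q
  refine IsAlmostPeriodic.of_totallyBounded (Φ := fun g => Matrix.of.symm (D g))
    ((isCompact_closedBall 0 1).totallyBounded.subset ?_) fun ε hε => ?_
  · rintro _ ⟨g, rfl⟩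
    simpa using hbound g
  refine ⟨ε / (n ^ 2 + 1), by positivity, fun x y hxy z w => ?_⟩
  have hentry : ∀ p q, ‖D x p q - D y p q‖ ≤ ε / (n ^ 2 + 1) := fun p q => by
    rw [← dist_eq_norm]
    exact ((dist_le_pi_dist _ _ q).trans (dist_le_pi_dist _ _ p)).trans hxy.le
  rw [hM, hM, hM, hM]
  calc _ ≤ (n : ℝ) ^ 2 * (ε / (n ^ 2 + 1)) := by
        simpa using Matrix.norm_mul_mul_apply_sub_le (hU z) (hU w) hentry j k
    _ < ε := by
        rw [← mul_div_assoc, div_lt_iff₀ (by positivity)]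
        nlinarith

variable [TopologicalSpace G]

namespace IsUnitaryRep

def coeff (hD : IsUnitaryRep n D) (j k : Fin n) : apSubalgebra G :=
  ⟨ofNormedAddCommGroup (fun g => D g j k) ((continuous_apply_apply j k).comp hD.1) 1
    fun g => entry_norm_bound_of_unitary (hD.2.1 g) j k,
    isAlmostPeriodic_apply_of_unitary hD.2.1 hD.2.2 j k⟩

@[simp]
theorem coeff_apply (hD : IsUnitaryRep n D) (j k : Fin n) (g : G) : hD.coeff j k g = D g j k :=
  rfl

end IsUnitaryRep

theorem MAPGroup.eq_of_forall_apply_eq (hG : MAPGroup G) {x y : G}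
    (h : ∀ f : apSubalgebra G, f x = f y) : x = y := by
  by_contra hxy
  obtain ⟨n, D, hD, hne⟩ := hG hxy
  exact hne (Matrix.ext fun j k => h (hD.coeff j k))

theorem MAPGroup.isClosed_setOf_apply_eq {L : Type*} [TopologicalSpace L] (hG : MAPGroup G)
    {t : L → G} (ht : ∀ f : apSubalgebra G, Continuous fun y => f (t y)) :
    IsClosed {p : L × G | t p.1 = p.2} := by
  have : {p : L × G | t p.1 = p.2} = ⋂ f : apSubalgebra G, {p | f (t p.1) = f p.2} := by
    ext p
    simp only [mem_iInter]
    exact ⟨fun h _ => congrArg _ h, hG.eq_of_forall_apply_eq⟩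
  rw [this]
  exact isClosed_iInter fun f =>
    isClosed_eq ((ht f).comp continuous_fst) ((f : G →ᵇ ℂ).continuous.comp continuous_snd)

end UnitaryRep

open ComplexConjugate

section ValueFunctional

variable {K : Type*} [Group K] [TopologicalSpace K]

theorem apSubalgebra.mem_span_unimodular_of_im_eq_zero {r : apSubalgebra K}
    (hr : ∀ x, (r x).im = 0) : r ∈ Submodule.span ℂ {u : apSubalgebra K | ∀ x, ‖u x‖ = 1} := by
  set M := ‖r‖ + 1
  have hM : 0 < M := by positivity
  have hre : ∀ x, ((r x).re / M) ^ 2 ≤ 1 := fun x => by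
    rw [div_pow, div_le_one (by positivity), sq_le_sq, abs_of_pos hM]
    calc |(r x).re| ≤ ‖r x‖ := Complex.abs_re_le_norm _
      _ ≤ ‖r‖ := (r : K →ᵇ ℂ).norm_coe_le_norm x
      _ ≤ M := by simp [M]
  -- `u` lies on the unit circle above the point `r / M` of `[-1, 1]`, so `r = M * Re u`.
  obtain ⟨u, hu⟩ := apSubalgebra.exists_comp r
    (φ := fun z => (z.re / M : ℝ) + (√(1 - (z.re / M) ^ 2) : ℝ) * Complex.I) (by fun_prop)
  have hu1 : ∀ x, ‖u x‖ = 1 := fun x => by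
    rw [hu, Complex.norm_add_mul_I, Real.sq_sqrt (by linarith [hre x])]
    simp
  have hru : r = ((M / 2 : ℝ) : ℂ) • (u + star u) := by
    ext x
    apply Complex.ext <;> simp [hu, hr x, Complex.add_re]
    field_simp
    ring
  rw [hru]
  refine Submodule.smul_mem _ _ (Submodule.add_mem _ (Submodule.subset_span hu1)
    (Submodule.subset_span fun x => ?_))
  simpa using hu1 x

theorem apSubalgebra.mem_span_unimodular (f : apSubalgebra K) :
    f ∈ Submodule.span ℂ {u : apSubalgebra K | ∀ x, ‖u x‖ = 1} := by
  have hf : f = (1 / 2 : ℂ) • (f + star f) + (Complex.I / 2) • (Complex.I • (star f - f)) := by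
    ext x
    apply Complex.ext <;> simp <;> ring
  rw [hf]
  exact Submodule.add_mem _
    (Submodule.smul_mem _ _ (mem_span_unimodular_of_im_eq_zero fun x => by simp))
    (Submodule.smul_mem _ _ (mem_span_unimodular_of_im_eq_zero fun x => by simp))

/-- The Gleason–Kahane–Żelazko condition, with the range of `f` in place of its spectrum. -/
def IsValueFunctional (Λ : apSubalgebra K →ₗ[ℂ] ℂ) : Prop :=
  ∀ f, ∃ x, f x = Λ f

namespace IsValueFunctional

variable {Λ : apSubalgebra K →ₗ[ℂ] ℂ} (hΛ : IsValueFunctional Λ)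
include hΛ

theorem map_one : Λ 1 = 1 := by
  obtain ⟨x, hx⟩ := hΛ 1
  simpa using hx.symm

theorem norm_map_le (f : apSubalgebra K) : ‖Λ f‖ ≤ ‖f‖ := by
  obtain ⟨x, hx⟩ := hΛ f
  exact hx ▸ (f : K →ᵇ ℂ).norm_coe_le_norm x

protected theorem continuous : Continuous Λ :=
  AddMonoidHomClass.continuous_of_bound Λ 1 fun f => by simpa using hΛ.norm_map_le f

theorem im_map_eq_zero {f : apSubalgebra K} (hf : ∀ x, (f x).im = 0) : (Λ f).im = 0 := by
  obtain ⟨x, hx⟩ := hΛ f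
  exact hx ▸ hf x

theorem map_star (f : apSubalgebra K) : Λ (star f) = conj (Λ f) := by
  have h₁ := hΛ.im_map_eq_zero (f := f + star f) fun x => by simp
  have h₂ := hΛ.im_map_eq_zero (f := Complex.I • (f - star f)) fun x => by simp
  rw [map_add] at h₁
  rw [map_smul, map_sub] at h₂
  apply Complex.ext <;> simp at h₁ h₂ ⊢ <;> linarith

theorem re_map_star_mul_self_nonneg (f : apSubalgebra K) : 0 ≤ (Λ (star f * f)).re := by
  obtain ⟨x, hx⟩ := hΛ (star f * f)
  rw [← hx]
  simp [Complex.conj_mul', ← Complex.ofReal_pow]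

/-- The Cauchy–Schwarz inequality for the positive functional `Λ`, in its degenerate case. -/
theorem map_mul_eq_zero {g : apSubalgebra K} (hg : Λ (star g * g) = 0) (f : apSubalgebra K) :
    Λ (f * g) = 0 := by
  set z := Λ (f * g)
  by_contra hz
  -- `0 ≤ Λ |f̄ - t z̄ g|² = Λ |f|² - 2 t |z|²` for every real `t`.
  have hexpand : ∀ t : ℝ, (Λ (star (star f - (t * conj z) • g) * (star f - (t * conj z) • g))).re
      = (Λ (star f * f)).re - 2 * t * Complex.normSq z := by
    intro t
    have : star (star f - (t * conj z) • g) * (star f - (t * conj z) • g)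
        = star f * f - (t * conj z) • (f * g) - (t * z) • star (f * g)
          + (t ^ 2 * Complex.normSq z : ℂ) • (star g * g) := by
      simp only [star_sub, star_smul, star_star, star_mul, sub_mul, mul_sub, smul_mul_assoc,
        mul_smul_comm, Complex.star_def, Complex.conj_ofReal, Complex.conj_conj, ← Complex.mul_conj,
        mul_comm f (star f)]
      module
    rw [this, map_add, map_sub, map_sub, map_smul, map_smul, map_smul, hg, hΛ.map_star]
    simp [Complex.normSq_apply, z]
    ring
  have hz₀ : 0 < Complex.normSq z := Complex.normSq_pos.2 hz
  have hpos := hΛ.re_map_star_mul_self_nonneg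
    (star f - ((((Λ (star f * f)).re + 1) / (2 * Complex.normSq z) : ℝ) * conj z) • g)
  rw [hexpand] at hpos
  field_simp at hpos
  linarith

theorem map_mul_of_norm_eq_one {u : apSubalgebra K} (hu : ∀ x, ‖u x‖ = 1) (f : apSubalgebra K) :
    Λ (f * u) = Λ f * Λ u := by
  have hμ : conj (Λ u) * Λ u = 1 := by
    obtain ⟨x, hx⟩ := hΛ u
    rw [← hx, ← Complex.normSq_eq_conj_mul_self, Complex.normSq_eq_norm_sq, hu]
    norm_num
  have hunit : star u * u = 1 := by
    ext x
    simp [← Complex.normSq_eq_conj_mul_self, Complex.normSq_eq_norm_sq, hu]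
  -- `u - Λ u` is a null vector of `Λ` since `|u| = |Λ u| = 1`.
  have hnull : Λ (star (u - Λ u • 1) * (u - Λ u • 1)) = 0 := by
    have : star (u - Λ u • 1) * (u - Λ u • 1)
        = star u * u - Λ u • star u - conj (Λ u) • u + (conj (Λ u) * Λ u) • 1 := by
      simp only [star_sub, star_smul, star_one, sub_mul, mul_sub, smul_mul_assoc, mul_smul_comm,
        one_mul, mul_one, Complex.star_def]
      module
    rw [this, hunit, map_add, map_sub, map_sub, map_smul, map_smul, map_smul, hΛ.map_star,
      hΛ.map_one, smul_eq_mul, smul_eq_mul, smul_eq_mul]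
    linear_combination -hμ
  have := hΛ.map_mul_eq_zero hnull f
  rw [mul_sub, map_sub, mul_smul_comm, map_smul, mul_one, smul_eq_mul, sub_eq_zero] at this
  rw [this, mul_comm]

theorem map_mul (f g : apSubalgebra K) : Λ (f * g) = Λ f * Λ g := by
  induction apSubalgebra.mem_span_unimodular g using Submodule.span_induction with
  | mem u hu => exact hΛ.map_mul_of_norm_eq_one hu f
  | zero => simp
  | add a b _ _ ha hb => simp [mul_add, ha, hb]
  | smul c a _ ha => simp [ha, mul_left_comm]

theorem exists_forall_apply_eq_zero (g : ℕ → apSubalgebra K) (hg : ∀ i, Λ (g i) = 0) :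
    ∃ x, ∀ i, g i x = 0 := by
  -- `∑ cᵢ |gᵢ|²`, with small weights `cᵢ > 0`, lies in the kernel of `Λ`, so it has a zero,
  -- which is a common zero of the `gᵢ`.
  set c : ℕ → ℝ := fun i => (1 / 2) ^ i / (1 + ‖star (g i) * g i‖)
  have hc : ∀ i, 0 < c i := fun i => by positivity
  set w : ℕ → apSubalgebra K := fun i => (c i : ℂ) • (star (g i) * g i)
  have hw : ∀ i x, w i x = (c i * Complex.normSq (g i x) : ℝ) := fun i x => by
    simp [w, Complex.normSq_eq_conj_mul_self]
  have hsum : Summable w := by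
    refine Summable.of_norm_bounded summable_geometric_two fun i => ?_
    rw [norm_smul, Complex.norm_real, Real.norm_of_nonneg (hc i).le, div_mul_eq_mul_div,
      div_le_iff₀ (by positivity)]
    nlinarith [norm_nonneg (star (g i) * g i), pow_pos (by norm_num : (0 : ℝ) < 1 / 2) i]
  have hΛsum : Λ (∑' i, w i) = 0 :=
    (hsum.hasSum.map Λ hΛ.continuous).unique (by simp [Function.comp_def, w, hΛ.map_mul, hg])
  obtain ⟨x, hx⟩ := hΛ (∑' i, w i)
  have heval : HasSum (fun i => (c i * Complex.normSq (g i x) : ℝ)) 0 := by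
    have := (hsum.hasSum.map (apSubalgebra K).subtype continuous_subtype_val).map
      (evalCLM ℂ x) (evalCLM ℂ x).continuous
    simp only [Function.comp_def, StarSubalgebra.subtype_apply, evalCLM_apply] at this
    rw [hx, hΛsum, funext fun i => hw i x, ← Complex.ofReal_zero] at this
    exact Complex.hasSum_ofReal.1 this
  refine ⟨x, fun i => ?_⟩
  have := (hasSum_zero_iff_of_nonneg fun i =>
    mul_nonneg (hc i).le (Complex.normSq_nonneg _)).1 heval
  simpa [(hc i).ne'] using congrFun this i

theorem exists_eq_apply [SigmaCompactSpace K] : ∃ x, ∀ f, Λ f = f x := by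
  by_contra! h
  choose F hF using h
  -- `g x ∈ ker Λ` does not vanish at `x`; by σ-compactness, countably many of them suffice.
  set g : K → apSubalgebra K := fun x => F x - Λ (F x) • 1
  have hΛg : ∀ x, Λ (g x) = 0 := fun x => by simp [g, hΛ.map_one]
  have hgx : ∀ x, g x x ≠ 0 := fun x => by simpa [g, sub_eq_zero] using (hF x).symm
  obtain ⟨s, hs, hcover⟩ := countable_cover_nhds (U := fun x => {y | g x y ≠ 0}) fun x =>
    (isOpen_ne_fun (g x : K →ᵇ ℂ).continuous continuous_const).mem_nhds (hgx x)
  have hne : s.Nonempty := by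
    obtain ⟨x, hx, -⟩ := mem_iUnion₂.1 (hcover ▸ mem_univ (1 : K))
    exact ⟨x, hx⟩
  obtain ⟨e, rfl⟩ := hs.exists_eq_range hne
  obtain ⟨x₀, hx₀⟩ := hΛ.exists_forall_apply_eq_zero (g ∘ e) fun i => hΛg (e i)
  obtain ⟨_, ⟨i, rfl⟩, hi⟩ := mem_iUnion₂.1 (hcover ▸ mem_univ x₀)
  exact hi (hx₀ i)

end IsValueFunctional

end ValueFunctional

section WeightedComposition

variable {K L : Type*} [Group K] [TopologicalSpace K] [Group L] [TopologicalSpace L]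

theorem exists_eq_mul_comp [SigmaCompactSpace K] (S : apSubalgebra K →ₗ[ℂ] apSubalgebra L)
    (hS : ∀ f, (∀ x, f x ≠ 0) → ∀ y, S f y ≠ 0) :
    ∃ t : L → K, ∀ f y, S f y = S 1 y * f (t y) := by
  have hS1 : ∀ y, S 1 y ≠ 0 := hS 1 (by simp)
  -- `Λ f = S f y / S 1 y` is a value of `f`, since `S (f - Λ f)` vanishes at `y`.
  have hpoint : ∀ y, ∃ x, ∀ f, (S 1 y)⁻¹ * S f y = f x := fun y => by
    let Λ : apSubalgebra K →ₗ[ℂ] ℂ :=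
      { toFun := fun f => (S 1 y)⁻¹ * S f y
        map_add' := fun f g => by simp [mul_add]
        map_smul' := fun c f => by simp [mul_left_comm] }
    refine IsValueFunctional.exists_eq_apply (Λ := Λ) fun f => ?_
    by_contra! hf
    refine hS (f - Λ f • 1) (fun x => by simpa [sub_eq_zero] using hf x) y ?_
    simp [Λ, mul_right_comm _ (S f y), hS1 y]
  choose t ht using hpoint
  exact ⟨t, fun f y => by rw [← ht y f, mul_inv_cancel_left₀ (hS1 y)]⟩

theorem leftInverse_of_eq_mul_comp (hL : MAPGroup L) {S : apSubalgebra K → apSubalgebra L}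
    {R : apSubalgebra L → apSubalgebra K} (hSR : ∀ g, S (R g) = g) {t : L → K} {s : K → L}
    (ht : ∀ f y, S f y = S 1 y * f (t y)) (hs : ∀ g x, R g x = R 1 x * g (s x)) :
    LeftInverse s t := by
  have hg : ∀ (g : apSubalgebra L) y, g y = S 1 y * R 1 (t y) * g (s (t y)) := fun g y => by
    rw [mul_assoc, ← hs, ← ht, hSR]
  intro y
  have h1 : S 1 y * R 1 (t y) = 1 := by simpa using (hg 1 y).symm
  refine (hL.eq_of_forall_apply_eq fun g => ?_).symm
  rw [hg g y, h1, one_mul]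

theorem injective_of_forall_ne_zero_iff (S : apSubalgebra K →ₗ[ℂ] apSubalgebra L)
    (hS : ∀ f, (∀ y, S f y ≠ 0) ↔ ∀ x, f x ≠ 0) : Injective S := by
  refine (injective_iff_map_eq_zero S).2 fun f hf => ?_
  by_contra hne
  obtain ⟨x, hx⟩ : ∃ x, f x ≠ 0 := by
    by_contra! h
    exact hne (Subtype.ext (BoundedContinuousFunction.ext h))
  have hS1 : ∀ y, S 1 y ≠ 0 := (hS 1).2 (by simp)
  -- `S (f - f x) = - f x * S 1` vanishes nowhere, but `f - f x` vanishes at `x`.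
  refine (hS (f - f x • 1)).1 (fun y => ?_) x (by simp)
  simpa [hf] using ⟨hx, hS1 y⟩

theorem continuous_comp_of_eq_mul_comp {S : apSubalgebra K → apSubalgebra L} {t : L → K}
    (hS1 : ∀ y, S 1 y ≠ 0) (ht : ∀ f y, S f y = S 1 y * f (t y)) (f : apSubalgebra K) :
    Continuous fun y => f (t y) := by
  have : (fun y => f (t y)) = fun y => S f y / S 1 y := funext fun y => by
    rw [ht, mul_div_cancel_left₀ _ (hS1 y)]
  rw [this]
  exact (S f : L →ᵇ ℂ).continuous.div (S 1 : L →ᵇ ℂ).continuous hS1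

theorem forall_symm_apply_ne_zero_iff (e : apSubalgebra K ≃ₗ[ℂ] apSubalgebra L)
    (he : ∀ f, (∀ y, e f y ≠ 0) ↔ ∀ x, f x ≠ 0) (g : apSubalgebra L) :
    (∀ x, e.symm g x ≠ 0) ↔ ∀ y, g y ≠ 0 := by
  simpa using (he (e.symm g)).symm

theorem exists_equiv_eq_mul_comp [SigmaCompactSpace K] [SigmaCompactSpace L]
    (hK : MAPGroup K) (hL : MAPGroup L) (e : apSubalgebra K ≃ₗ[ℂ] apSubalgebra L)
    (he : ∀ f, (∀ y, e f y ≠ 0) ↔ ∀ x, f x ≠ 0) :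
    ∃ t : L ≃ K, (∀ f y, e f y = e 1 y * f (t y)) ∧
      ∀ g x, e.symm g x = e.symm 1 x * g (t.symm x) := by
  obtain ⟨t, ht⟩ := exists_eq_mul_comp e.toLinearMap fun f => (he f).2
  obtain ⟨s, hs⟩ := exists_eq_mul_comp e.symm.toLinearMap fun g =>
    (forall_symm_apply_ne_zero_iff e he g).2
  exact ⟨⟨t, s, leftInverse_of_eq_mul_comp hL e.apply_symm_apply ht hs,
    leftInverse_of_eq_mul_comp hK e.symm_apply_apply hs ht⟩, ht, hs⟩

end WeightedComposition

namespace RespectsUnitaryRepsB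

variable {G H : Type*} [Group G] [TopologicalSpace G] [Group H] [TopologicalSpace H]
  {T : (G →ᵇ ℂ) → (H →ᵇ ℂ)}

theorem isCharacter_apply_one (hT : RespectsUnitaryRepsB T) : IsCharacter ⇑(T 1) := by
  have hone : (Matrix.of fun _ _ => 1 : Matrix (Fin 1) (Fin 1) ℂ) = 1 := by
    ext i j
    fin_cases i; fin_cases j; rfl
  obtain ⟨hU, hM⟩ := hT 1 (fun _ _ => 1) (fun g => by simp [hone])
    (fun a b => by simp [hone])
  refine ⟨(T 1).continuous, fun h => ?_, fun a b => ?_⟩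
  · have := congrFun (congrFun (Matrix.mem_unitaryGroup_iff'.1 (hU h)) 0) 0
    rw [Matrix.mul_apply, Fin.sum_univ_one, Matrix.star_apply, Matrix.of_apply, Complex.star_def,
      Complex.conj_mul', Matrix.one_apply_eq] at this
    exact (pow_eq_one_iff_of_nonneg (norm_nonneg _) two_ne_zero).1 (by exact_mod_cast this)
  · simpa [Matrix.mul_apply] using congrFun (congrFun (hM a b) 0) 0

theorem map_mul_of_eq_mul_comp (hT : RespectsUnitaryRepsB T) (hG : MAPGroup G) {γ : H → ℂ}
    (hγ : IsCharacter γ) {t : H → G} (ht : ∀ f : apSubalgebra G, ∀ h, T f h = γ h * f (t h))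
    (a b : H) : t (a * b) = t a * t b := by
  by_contra hne
  obtain ⟨n, D, hD, hDne⟩ := hG hne
  obtain ⟨-, hM⟩ := hT n (fun j k => hD.coeff j k) hD.2.1 hD.2.2
  have hγ₀ : γ (a * b) ≠ 0 := norm_ne_zero_iff.1 ((hγ.2.1 (a * b)).trans_ne one_ne_zero)
  refine hDne (Matrix.ext fun j k => mul_left_cancel₀ hγ₀ ?_)
  have := congrFun (congrFun (hM a b) j) k
  simp only [Matrix.of_apply, Matrix.mul_apply, ht, IsUnitaryRep.coeff_apply] at this
  rw [this, hD.2.2, Matrix.mul_apply, Finset.mul_sum, hγ.2.2]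
  exact Finset.sum_congr rfl fun p _ => by ring

end RespectsUnitaryRepsB

theorem ap_onto_isometry_induces_isomorphism_general
    {G H : Type u} [Group G] [TopologicalSpace G] [IsTopologicalGroup G]
    [LocallyCompactSpace G] [T2Space G] [SigmaCompactSpace G]
    [Group H] [TopologicalSpace H] [IsTopologicalGroup H]
    [LocallyCompactSpace H] [T2Space H] [SigmaCompactSpace H]
    (hGmap : MAPGroup G) (hHmap : MAPGroup H)
    (T : (G →ᵇ ℂ) → (H →ᵇ ℂ))
    (hTap : ∀ f : G →ᵇ ℂ, IsAlmostPeriodic ⇑f → IsAlmostPeriodic ⇑(T f))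
    (hTadd : ∀ f g : G →ᵇ ℂ, IsAlmostPeriodic ⇑f → IsAlmostPeriodic ⇑g →
      T (f + g) = T f + T g)
    (hTsmul : ∀ (c : ℂ) (f : G →ᵇ ℂ), IsAlmostPeriodic ⇑f → T (c • f) = c • T f)
    (hTnv : ∀ f : G →ᵇ ℂ, IsAlmostPeriodic ⇑f →
      ((∀ y : H, T f y ≠ 0) ↔ ∀ x : G, f x ≠ 0))
    (hTrep : RespectsUnitaryRepsB T)
    (hTonto : ∀ g : H →ᵇ ℂ, IsAlmostPeriodic ⇑g →
      ∃ f : G →ᵇ ℂ, IsAlmostPeriodic ⇑f ∧ T f = g) :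
    ∃ t : H ≃ₜ G, (∀ a b : H, t (a * b) = t a * t b) ∧
      ∃ γ : H → ℂ, IsCharacter γ ∧
        ∀ f : G →ᵇ ℂ, IsAlmostPeriodic ⇑f →
          ∀ h : H, T f h = γ h * f (t h) := by
  let Tₗ : apSubalgebra G →ₗ[ℂ] apSubalgebra H :=
    { toFun := fun f => ⟨T f, hTap f f.2⟩
      map_add' := fun f g => Subtype.ext (hTadd f g f.2 g.2)
      map_smul' := fun c f => Subtype.ext (hTsmul c f f.2) }
  have hTₗ : ∀ f, (∀ y, Tₗ f y ≠ 0) ↔ ∀ x, f x ≠ 0 := fun f => hTnv f f.2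
  have hsurj : Surjective Tₗ := fun g => by
    obtain ⟨f, hf, hfg⟩ := hTonto g g.2
    exact ⟨⟨f, hf⟩, Subtype.ext hfg⟩
  let e := LinearEquiv.ofBijective Tₗ ⟨injective_of_forall_ne_zero_iff Tₗ hTₗ, hsurj⟩
  obtain ⟨t, ht, hs⟩ := exists_equiv_eq_mul_comp hGmap hHmap e hTₗ
  have hγ : IsCharacter ⇑(T 1) := hTrep.isCharacter_apply_one
  let tₘ : H ≃* G := { t with map_mul' := hTrep.map_mul_of_eq_mul_comp hGmap hγ ht }
  have htc : Continuous tₘ := tₘ.toMonoidHom.continuous_of_isClosed_graph <|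
    hGmap.isClosed_setOf_apply_eq <| continuous_comp_of_eq_mul_comp ((hTₗ 1).2 (by simp)) ht
  have hsc : Continuous tₘ.symm := tₘ.symm.toMonoidHom.continuous_of_isClosed_graph <|
    hHmap.isClosed_setOf_apply_eq <| continuous_comp_of_eq_mul_comp
      ((forall_symm_apply_ne_zero_iff e hTₗ 1).2 (by simp)) hs
  exact ⟨⟨tₘ.toEquiv, htc, hsc⟩, tₘ.map_mul, T 1, hγ, fun f hf => ht ⟨f, hf⟩⟩

/-- Let `G`, `H` be σ-compact maximally almost periodic locally compact Hausdorff groups and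
suppose `T` is a non-vanishing linear isometry of `AP(G)` *onto* `AP(H)` respecting
finite-dimensional unitary representations. Then there are a topological group isomorphism
`t : H → G` and a continuous character `γ` of `H` with `(T f) h = γ h * f (t h)` for all
`h ∈ H` and all `f ∈ AP(G)`. -/
theorem ap_onto_isometry_induces_isomorphism
    {G H : Type u} [Group G] [TopologicalSpace G] [IsTopologicalGroup G]
    [LocallyCompactSpace G] [T2Space G] [SigmaCompactSpace G]
    [Group H] [TopologicalSpace H] [IsTopologicalGroup H]
    [LocallyCompactSpace H] [T2Space H] [SigmaCompactSpace H]
    (hGmap : MAPGroup G) (hHmap : MAPGroup H)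
    (T : (G →ᵇ ℂ) → (H →ᵇ ℂ))
    (hTap : ∀ f : G →ᵇ ℂ, IsAlmostPeriodic ⇑f → IsAlmostPeriodic ⇑(T f))
    (hTadd : ∀ f g : G →ᵇ ℂ, IsAlmostPeriodic ⇑f → IsAlmostPeriodic ⇑g →
      T (f + g) = T f + T g)
    (hTsmul : ∀ (c : ℂ) (f : G →ᵇ ℂ), IsAlmostPeriodic ⇑f → T (c • f) = c • T f)
    (hTiso : ∀ f : G →ᵇ ℂ, IsAlmostPeriodic ⇑f → ‖T f‖ = ‖f‖)
    (hTnv : ∀ f : G →ᵇ ℂ, IsAlmostPeriodic ⇑f →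
      ((∀ y : H, T f y ≠ 0) ↔ ∀ x : G, f x ≠ 0))
    (hTrep : RespectsUnitaryRepsB T)
    (hTonto : ∀ g : H →ᵇ ℂ, IsAlmostPeriodic ⇑g →
      ∃ f : G →ᵇ ℂ, IsAlmostPeriodic ⇑f ∧ T f = g) :
    ∃ t : H ≃ₜ G, (∀ a b : H, t (a * b) = t a * t b) ∧
      ∃ γ : H → ℂ, IsCharacter γ ∧
        ∀ f : G →ᵇ ℂ, IsAlmostPeriodic ⇑f →
          ∀ h : H, T f h = γ h * f (t h) :=
  ap_onto_isometry_induces_isomorphism_general hGmap hHmap T hTap hTadd hTsmul hTnv hTrep hTonto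

end
end

section
/- Let τ₁ and τ₂ be two group topologies on a group G, each making G a maximally almost periodic locally compact Hausdorff group that respects compactness. If AP(G, τ₁) = AP(G, τ₂), then τ₁ = τ₂. -/
open scoped BoundedContinuousFunction

noncomputable section

universe u
/-- The set of almost periodic functions of `(G, τ)`: the τ-continuous functions satisfying the
almost periodicity condition. -/
def APSet (G : Type*) [Group G] (τ : TopologicalSpace G) : Set (G → ℂ) :=
  {f : G → ℂ | IsAlmostPeriodic f ∧ @Continuous G ℂ τ _ f}

/-! Matrix coefficients of a finite-dimensional unitary representation are almost periodic, so
`AP(G, τ₁) = AP(G, τ₂)` forces the two topologies to have the same continuous unitary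
representations, hence the same Bohr topology `σ`, which is coarser than both `τᵢ` and Hausdorff
by maximal almost periodicity. Given a `τ₁`-open `U` and a compact `τ₂`-neighbourhood `K` of a
point of `U`: `K` is `σ`-compact, hence `τ₁`-compact as `τ₁` respects compactness, so `K \ U` is
`τ₁`-compact, hence `σ`-compact, `σ`-closed and `τ₂`-closed. Thus `K \ (K \ U) ⊆ U` is a
`τ₂`-neighbourhood of the point, and `U` is `τ₂`-open; the converse is symmetric. -/

open Metric

theorem isAlmostPeriodic_of_totallyBounded_range {G X : Type*} [Group G] [PseudoMetricSpace X]
    {f : G → ℂ} {F : G → X} (hF : TotallyBounded (Set.range F))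
    (hf : ∀ ε > 0, ∃ δ > 0, ∀ z w x y : G,
      dist (F x) (F y) < δ → ‖f (z * x * w) - f (z * y * w)‖ < ε) :
    IsAlmostPeriodic f := by
  intro ε hε
  obtain ⟨δ, hδ, hfδ⟩ := hf ε hε
  obtain ⟨t, htfin, hcover⟩ := totallyBounded_iff.1 hF (δ / 2) (half_pos hδ)
  obtain ⟨n, e, rfl⟩ := htfin.fin_embedding
  refine ⟨n, fun i => F ⁻¹' ball (e i) (δ / 2), Set.eq_univ_of_forall fun g => ?_, ?_⟩
  · obtain ⟨_, ⟨i, rfl⟩, hg⟩ := Set.mem_iUnion₂.1 (hcover (Set.mem_range_self g))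
    exact Set.mem_iUnion.2 ⟨i, hg⟩
  · intro i z w x y hx hy
    refine hfδ z w x y ?_
    have := dist_triangle_right (F x) (F y) (e i)
    rw [Set.mem_preimage, mem_ball] at hx hy
    linarith

theorem MulHom.isAlmostPeriodic_comp {G E : Type*} [Group G] [NormedRing E] [ProperSpace E]
    (D : G →ₙ* E) (hD : ∀ g, ‖D g‖ ≤ 1) {φ : E → ℂ} (hφ : UniformContinuous φ) :
    IsAlmostPeriodic (φ ∘ D) := by
  have hrange : Set.range D ⊆ closedBall 0 1 := by
    rintro _ ⟨g, rfl⟩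
    simpa using hD g
  refine isAlmostPeriodic_of_totallyBounded_range
    ((isCompact_closedBall 0 1).totallyBounded.subset hrange) fun ε hε => ?_
  obtain ⟨δ, hδ, hφδ⟩ := uniformContinuous_iff.1 hφ ε hε
  refine ⟨δ, hδ, fun z w x y hxy => ?_⟩
  rw [← dist_eq_norm]
  simp only [Function.comp_apply, map_mul]
  apply hφδ
  calc dist (D z * D x * D w) (D z * D y * D w) = ‖D z * (D x - D y) * D w‖ := by
        rw [dist_eq_norm, mul_sub, sub_mul]
    _ ≤ ‖D z‖ * ‖D x - D y‖ * ‖D w‖ := norm_mul₃_le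
    _ ≤ 1 * ‖D x - D y‖ * 1 := by gcongr <;> exact hD _
    _ < δ := by rwa [one_mul, mul_one, ← dist_eq_norm]

theorem CStarRing.norm_le_one_of_mem_unitary {E : Type*} [NormedRing E] [StarRing E] [CStarRing E]
    {U : E} (hU : U ∈ unitary E) : ‖U‖ ≤ 1 := by
  rcases subsingleton_or_nontrivial E with _ | _
  · simp [Subsingleton.elim U 0]
  · exact (norm_of_mem_unitary hU).le

open scoped Matrix.Norms.L2Operator in
theorem isAlmostPeriodic_apply_of_mem_unitaryGroup {G : Type*} [Group G] {n : ℕ}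
    {D : G → Matrix (Fin n) (Fin n) ℂ} (hu : ∀ g, D g ∈ Matrix.unitaryGroup (Fin n) ℂ)
    (hm : ∀ a b : G, D (a * b) = D a * D b) (j k : Fin n) :
    IsAlmostPeriodic fun g => D g j k :=
  MulHom.isAlmostPeriodic_comp ⟨D, hm⟩ (fun g => CStarRing.norm_le_one_of_mem_unitary (hu g))
    (φ := fun M => M j k) ((Pi.uniformContinuous_proj _ k).comp (Pi.uniformContinuous_proj _ j))

theorem isUnitaryRep_of_APSet_subset {G : Type*} [Group G] {τ₁ τ₂ : TopologicalSpace G}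
    (hAP : APSet G τ₁ ⊆ APSet G τ₂) {n : ℕ} {D : G → Matrix (Fin n) (Fin n) ℂ}
    (hD : @IsUnitaryRep G _ τ₁ n D) : @IsUnitaryRep G _ τ₂ n D := by
  obtain ⟨hc, hu, hm⟩ := hD
  refine ⟨@continuous_matrix _ _ _ _ _ τ₂ _ fun j k => (hAP ⟨?_, ?_⟩).2, hu, hm⟩
  · exact isAlmostPeriodic_apply_of_mem_unitaryGroup hu hm j k
  · exact @Continuous.matrix_elem _ _ _ _ τ₁ _ _ hc j k

theorem bohrTopology_eq_of_APSet_eq {G : Type*} [Group G] {τ₁ τ₂ : TopologicalSpace G}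
    (hAP : APSet G τ₁ = APSet G τ₂) : @bohrTopology G _ τ₁ = @bohrTopology G _ τ₂ := by
  have : @IsUnitaryRep G _ τ₁ = @IsUnitaryRep G _ τ₂ := funext₂ fun _ _ =>
    propext ⟨isUnitaryRep_of_APSet_subset hAP.le, isUnitaryRep_of_APSet_subset hAP.ge⟩
  unfold bohrTopology
  rw [this]

section BohrTopology

variable {G : Type*} [Group G] [TopologicalSpace G]

theorem le_bohrTopology : ‹TopologicalSpace G› ≤ bohrTopology G :=
  le_iInf₂ fun _ D => continuous_iff_le_induced.1 D.2.1

theorem IsUnitaryRep.continuous_bohrTopology {n : ℕ} {D : G → Matrix (Fin n) (Fin n) ℂ}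
    (hD : IsUnitaryRep n D) : @Continuous G _ (bohrTopology G) _ D :=
  continuous_iff_le_induced.2 <| iInf₂_le_of_le n ⟨D, hD⟩ le_rfl

theorem MAPGroup.t2Space_bohrTopology (h : MAPGroup G) : @T2Space G (bohrTopology G) :=
  @T2Space.mk G (bohrTopology G) fun _ _ hxy =>
    let ⟨_, _, hD, hne⟩ := h hxy
    @separated_by_continuous G _ (bohrTopology G) _ _ _ hD.continuous_bohrTopology _ _ hne

end BohrTopology

theorem le_of_isCompact_imp_of_locallyCompactSpace {X : Type*} {τ σ τ' : TopologicalSpace X}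
    (hτ : τ ≤ σ) (hτ' : τ' ≤ σ) (hσ : @T2Space X σ) (hlc : @LocallyCompactSpace X τ')
    (hcpt : ∀ s : Set X, @IsCompact X σ s → @IsCompact X τ s) : τ' ≤ τ := by
  have coarsen {t t' : TopologicalSpace X} (h : t ≤ t') {s : Set X} (hs : @IsCompact X t s) :
      @IsCompact X t' s := by
    simpa using @IsCompact.image X X t t' s id hs (continuous_id_of_le h)
  intro U hU
  rw [@isOpen_iff_mem_nhds X τ']
  intro x hxU
  obtain ⟨K, hKx, -, hK⟩ := @local_compact_nhds X τ' hlc x Set.univ Filter.univ_mem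
  have hKU : @IsCompact X σ (K \ U) :=
    coarsen hτ (@IsCompact.diff X τ K U (hcpt K (coarsen hτ' hK)) hU)
  have hopen : @IsOpen X τ' (K \ U)ᶜ :=
    hτ' _ (@IsClosed.isOpen_compl X σ _ (@IsCompact.isClosed X σ hσ _ hKU))
  refine Filter.mem_of_superset
    (Filter.inter_mem (@IsOpen.mem_nhds X τ' _ _ hopen fun h => h.2 hxU) hKx) ?_
  exact fun v ⟨hv, hvK⟩ => by_contra fun hvU => hv ⟨hvK, hvU⟩

theorem unique_MAPLC_topology_respecting_compactness_of_same_AP_general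
    {G : Type u} [Group G] (τ₁ τ₂ : TopologicalSpace G)
    (h₁lc : @LocallyCompactSpace G τ₁) (h₂lc : @LocallyCompactSpace G τ₂)
    (h₁map : @MAPGroup G _ τ₁)
    (h₁rc : @RespectsCompactness G _ τ₁) (h₂rc : @RespectsCompactness G _ τ₂)
    (hAP : APSet G τ₁ = APSet G τ₂) :
    τ₁ = τ₂ := by
  have hbohr := bohrTopology_eq_of_APSet_eq hAP
  have h₁le : τ₁ ≤ @bohrTopology G _ τ₁ := @le_bohrTopology G _ τ₁
  have h₂le : τ₂ ≤ @bohrTopology G _ τ₁ := hbohr ▸ @le_bohrTopology G _ τ₂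
  have hT2 := @MAPGroup.t2Space_bohrTopology G _ τ₁ h₁map
  exact le_antisymm
    (le_of_isCompact_imp_of_locallyCompactSpace h₂le h₁le hT2 h₁lc fun s hs => h₂rc s (hbohr ▸ hs))
    (le_of_isCompact_imp_of_locallyCompactSpace h₁le h₂le hT2 h₂lc h₁rc)

/-- If `τ₁` and `τ₂` are two maximally almost periodic locally compact Hausdorff group topologies
on a group `G`, both respecting compactness, with the same almost periodic functions, then
`τ₁ = τ₂`. -/
theorem unique_MAPLC_topology_respecting_compactness_of_same_AP
    {G : Type u} [Group G] (τ₁ τ₂ : TopologicalSpace G)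
    (h₁grp : @IsTopologicalGroup G τ₁ _) (h₂grp : @IsTopologicalGroup G τ₂ _)
    (h₁lc : @LocallyCompactSpace G τ₁) (h₂lc : @LocallyCompactSpace G τ₂)
    (h₁t2 : @T2Space G τ₁) (h₂t2 : @T2Space G τ₂)
    (h₁map : @MAPGroup G _ τ₁) (h₂map : @MAPGroup G _ τ₂)
    (h₁rc : @RespectsCompactness G _ τ₁) (h₂rc : @RespectsCompactness G _ τ₂)
    (hAP : APSet G τ₁ = APSet G τ₂) :
    τ₁ = τ₂ :=
  unique_MAPLC_topology_respecting_compactness_of_same_AP_general τ₁ τ₂ h₁lc h₂lc h₁map h₁rc h₂rc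
    hAP

end
end
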